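/- For all n ≥ 0, the partition function satisfies p(7n + 5) ≡ 0 (mod 7). -/

import Mathlib

namespace Ramanujan7

open Finset

/-- Triangular numbers. -/
def tri : ℕ → ℕ
  | 0 => 0
  | k + 1 => tri k + (k + 1)

lemma tri_succ (k : ℕ) : tri (k + 1) = tri k + (k + 1) := rfl

lemma tri_le (k : ℕ) : k ≤ tri k := by
  induction k with
  | zero => exact le_refl 0
  | succ k ih => rw [tri_succ]; omega

lemma two_mul_tri (k : ℕ) : 2 * tri k = k * (k + 1) := by
  induction k with
  | zero => rfl
  | succ k ih =>
    calc 2 * tri (k + 1) = 2 * tri k + 2 * (k + 1) := by rw [tri_succ]; ring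
    _ = k * (k + 1) + 2 * (k + 1) := by rw [ih]
    _ = (k + 1) * (k + 1 + 1) := by ring

lemma tri_mono : StrictMono tri := strictMono_nat_of_lt_succ fun n => by rw [tri_succ]; omega

variable {A : Type*} [CommRing A]

/-- Gaussian binomial coefficient as an element of a commutative ring, with `q` a
ring element. -/
def gb (q : A) : ℕ → ℕ → A
  | 0, 0 => 1
  | 0, _ + 1 => 0
  | _ + 1, 0 => 1
  | n + 1, k + 1 => gb q n (k + 1) + q ^ (n - k) * gb q n k

variable (q : A)

lemma gb_zero_right (n : ℕ) : gb q n 0 = 1 := by cases n <;> rfl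

lemma gb_eq_zero {n k : ℕ} (h : n < k) : gb q n k = 0 := by
  induction n generalizing k with
  | zero => match k, h with | k + 1, _ => rfl
  | succ n ih =>
    match k, h with
    | k + 1, h =>
      rw [gb, ih (by omega), ih (by omega), mul_zero, add_zero]

lemma gb_self (n : ℕ) : gb q n n = 1 := by
  induction n with
  | zero => rfl
  | succ n ih => rw [gb, gb_eq_zero q (by omega), ih, zero_add, Nat.sub_self, pow_zero, one_mul]

lemma gb_pascal1 (n k : ℕ) : gb q (n + 1) (k + 1) = gb q n (k + 1) + q ^ (n - k) * gb q n k := rfl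

lemma gb_pascal2 (n k : ℕ) :
    gb q (n + 1) (k + 1) = q ^ (k + 1) * gb q n (k + 1) + gb q n k := by
  induction n generalizing k with
  | zero =>
    match k with
    | 0 => simp [gb]
    | k + 1 => simp [gb, gb_eq_zero q (Nat.succ_pos _), gb_eq_zero q (by omega : k + 1 < k + 2)]
  | succ n ih =>
    rcases le_or_gt (k + 1) (n + 1) with h | h
    · match k with
      | 0 =>
        conv_lhs => rw [gb_pascal1, ih 0]
        conv_rhs => rw [gb_pascal1]
        rw [gb_zero_right, gb_zero_right]
        have e1 : n + 1 - 0 = (n - 0) + 1 := by omega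
        rw [e1, pow_succ]
        ring
      | m + 1 =>
        obtain ⟨a, rfl⟩ : ∃ a, n = m + 1 + a := ⟨n - (m + 1), by omega⟩
        conv_lhs => rw [gb_pascal1, ih (m + 1), ih m]
        conv_rhs => rw [gb_pascal1 q (m + 1 + a) (m + 1), gb_pascal1 q (m + 1 + a) m]
        have e1 : m + 1 + a + 1 - (m + 1) = a + 1 := by omega
        have e2 : m + 1 + a - (m + 1) = a := by omega
        have e3 : m + 1 + a - m = a + 1 := by omega
        rw [e1, e2, e3]
        have e4 : q ^ (a + 1) * q ^ (m + 1) = q ^ (m + 1 + 1) * q ^ a := by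
          rw [← pow_add, ← pow_add, show a + 1 + (m + 1) = m + 1 + 1 + a from by omega]
        calc q ^ (m + 1 + 1) * gb q (m + 1 + a) (m + 1 + 1) + gb q (m + 1 + a) (m + 1) +
              q ^ (a + 1) * (q ^ (m + 1) * gb q (m + 1 + a) (m + 1) + gb q (m + 1 + a) m)
            = q ^ (m + 1 + 1) * gb q (m + 1 + a) (m + 1 + 1) + gb q (m + 1 + a) (m + 1) +
              (q ^ (a + 1) * q ^ (m + 1)) * gb q (m + 1 + a) (m + 1) +
              q ^ (a + 1) * gb q (m + 1 + a) m := by ring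
          _ = q ^ (m + 1 + 1) *
                (gb q (m + 1 + a) (m + 1 + 1) + q ^ a * gb q (m + 1 + a) (m + 1)) +
              (gb q (m + 1 + a) (m + 1) + q ^ (a + 1) * gb q (m + 1 + a) m) := by
              rw [e4]; ring
    · rcases eq_or_lt_of_le (show n + 1 ≤ k by omega) with h' | h'
      · have hk : k = n + 1 := by omega
        subst hk
        rw [gb_self, gb_self, gb_eq_zero q (show n + 1 < n + 1 + 1 by omega)]
        ring
      · rw [gb_eq_zero q (show n + 1 + 1 < k + 1 by omega),
          gb_eq_zero q (show n + 1 < k + 1 by omega),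
          gb_eq_zero q (show n + 1 < k by omega)]
        ring

/-- Euler products `∏_{i=1}^m (1 - q^i)`. -/
def Dq (q : A) (m : ℕ) : A := ∏ i ∈ range m, (1 - q ^ (i + 1))

lemma Dq_zero : Dq q 0 = 1 := rfl

lemma Dq_succ (m : ℕ) : Dq q (m + 1) = Dq q m * (1 - q ^ (m + 1)) := prod_range_succ _ _

lemma gb_mul_Dq {n k : ℕ} (h : k ≤ n) : gb q n k * Dq q k * Dq q (n - k) = Dq q n := by
  induction n generalizing k with
  | zero =>
    match k, h with
    | 0, _ => simp [gb, Dq_zero]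
  | succ n ih =>
    match k with
    | 0 => simp [gb_zero_right, Dq_zero]
    | m + 1 =>
      rcases eq_or_lt_of_le h with h' | h'
      · have hm : m = n := by omega
        subst hm
        simp [gb_self, Dq_zero]
      · obtain ⟨a, rfl⟩ : ∃ a, n = m + 1 + a := ⟨n - (m + 1), by omega⟩
        have e1 : m + 1 + a + 1 - (m + 1) = a + 1 := by omega
        have e2 : m + 1 + a - (m + 1) = a := by omega
        have e3 : m + 1 + a - m = a + 1 := by omega
        rw [gb_pascal1, e1, e3, Dq_succ q (m + 1 + a)]
        have i1 := ih (show m + 1 ≤ m + 1 + a by omega)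
        rw [e2] at i1
        have i2 := ih (by omega : m ≤ m + 1 + a)
        rw [e3] at i2
        have e4 : q ^ (a + 1) * q ^ (m + 1) = q ^ (m + 1 + a + 1) := by
          rw [← pow_add, show a + 1 + (m + 1) = m + 1 + a + 1 from by omega]
        calc (gb q (m + 1 + a) (m + 1) + q ^ (a + 1) * gb q (m + 1 + a) m) * Dq q (m + 1) *
              Dq q (a + 1)
            = (gb q (m + 1 + a) (m + 1) * Dq q (m + 1) * Dq q a) * (1 - q ^ (a + 1)) +
              q ^ (a + 1) * ((gb q (m + 1 + a) m * Dq q m * Dq q (a + 1)) * (1 - q ^ (m + 1))) := by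
              rw [Dq_succ q a, Dq_succ q m]; ring
          _ = Dq q (m + 1 + a) * (1 - q ^ (a + 1)) +
              q ^ (a + 1) * (Dq q (m + 1 + a) * (1 - q ^ (m + 1))) := by rw [i1, i2]
          _ = Dq q (m + 1 + a) * (1 - q ^ (a + 1) * q ^ (m + 1)) := by ring
          _ = Dq q (m + 1 + a) * (1 - q ^ (m + 1 + a + 1)) := by rw [e4]

/-! ### The exponent function for the finite Jacobi triple product -/

/-- `tExp n j` is the triangular number `T(j - n)` where for negative `k`,
`T(k) = T(-k-1)`. -/
def tExp (n j : ℕ) : ℕ := if n ≤ j then tri (j - n) else tri (n - j - 1)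

lemma tExp_ge (n d : ℕ) : tExp n (n + d) = tri d := by
  rw [tExp, if_pos (by omega), Nat.add_sub_cancel_left]

lemma tExp_lt {n j : ℕ} (h : j < n) : tExp n j = tri (n - j - 1) := by
  rw [tExp, if_neg (by omega)]

lemma tExp_E1 (n j : ℕ) : tExp (n + 1) j + j = n + tExp n j := by
  rcases lt_trichotomy j n with h | h | h
  · obtain ⟨d, rfl⟩ : ∃ d, n = j + 1 + d := ⟨n - j - 1, by omega⟩
    rw [tExp_lt (by omega), tExp_lt (by omega),
      show j + 1 + d + 1 - j - 1 = d + 1 from by omega,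
      show j + 1 + d - j - 1 = d from by omega, tri_succ]
    omega
  · subst h
    have a1 : tExp j j = 0 := by simpa [tri] using tExp_ge j 0
    rw [tExp_lt (by omega), show j + 1 - j - 1 = 0 from by omega, a1]
    simp [tri]
  · obtain ⟨d, rfl⟩ : ∃ d, j = n + 1 + d := ⟨j - n - 1, by omega⟩
    rw [show n + 1 + d = (n + 1) + d from rfl, tExp_ge,
      show n + 1 + d = n + (d + 1) from by omega, tExp_ge, tri_succ]
    omega

lemma tExp_E2 (n j : ℕ) : tExp (n + 1) (j + 1) = tExp n j := by
  rcases le_or_gt n j with h | h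
  · obtain ⟨d, rfl⟩ : ∃ d, j = n + d := ⟨j - n, by omega⟩
    rw [show n + d + 1 = (n + 1) + d from by omega, tExp_ge, tExp_ge]
  · rw [tExp_lt (by omega), tExp_lt h]
    congr 1
    omega

lemma tExp_E3 {n j : ℕ} (h : j ≤ 2 * n) :
    tExp (n + 1) (j + 2) + (2 * n - j) = (n + 1) + tExp n j := by
  rcases le_or_gt n j with hj | hj
  · obtain ⟨d, rfl⟩ : ∃ d, j = n + d := ⟨j - n, by omega⟩
    rw [tExp_ge, show n + d + 2 = (n + 1) + (d + 1) from by omega, tExp_ge, tri_succ]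
    omega
  · rcases eq_or_lt_of_le (show j + 1 ≤ n from hj) with h' | h'
    · -- j = n - 1
      obtain rfl : n = j + 1 := by omega
      have a1 : tExp (j + 1 + 1) (j + 2) = 0 := by simpa [tri] using tExp_ge (j + 2) 0
      have a2 : tExp (j + 1) j = 0 := by
        rw [tExp_lt (by omega), show j + 1 - j - 1 = 0 from by omega]; rfl
      rw [a1, a2]
      omega
    · -- j + 2 ≤ n, i.e. j < n - 1
      obtain ⟨d, rfl⟩ : ∃ d, n = j + 2 + d := ⟨n - j - 2, by omega⟩
      rw [tExp_lt (by omega), tExp_lt (by omega),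
        show j + 2 + d - j - 1 = d + 1 from by omega,
        show j + 2 + d + 1 - (j + 2) - 1 = d from by omega, tri_succ]
      omega

/-! ### Double Pascal recurrences for Gaussian binomials -/

lemma gb_dp1 (n : ℕ) :
    gb q (2 * n + 2) 1 = q ^ 1 * gb q (2 * n) 1 + (1 + q ^ (2 * n + 1)) * gb q (2 * n) 0 := by
  have h1 := gb_pascal1 q (2 * n + 1) 0
  have h2 := gb_pascal2 q (2 * n) 0
  rw [show 2 * n + 2 = (2 * n + 1) + 1 from rfl, h1, h2, gb_zero_right, gb_zero_right,
    show 2 * n + 1 - 0 = 2 * n + 1 from by omega]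
  ring

lemma gb_dp (n m : ℕ) (h2 : m ≤ 2 * n) :
    gb q (2 * n + 2) (m + 2) = q ^ (m + 2) * gb q (2 * n) (m + 2) +
      (1 + q ^ (2 * n + 1)) * gb q (2 * n) (m + 1) + q ^ (2 * n - m) * gb q (2 * n) m := by
  have h1 : gb q (2 * n + 2) (m + 2) =
      gb q (2 * n + 1) (m + 2) + q ^ (2 * n - m) * gb q (2 * n + 1) (m + 1) := by
    have := gb_pascal1 q (2 * n + 1) (m + 1)
    rw [show 2 * n + 1 - (m + 1) = 2 * n - m from by omega] at this
    exact this
  rw [h1, gb_pascal2 q (2 * n) (m + 1), gb_pascal2 q (2 * n) m]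
  have e : q ^ (2 * n - m) * q ^ (m + 1) = q ^ (2 * n + 1) := by
    rw [← pow_add, show 2 * n - m + (m + 1) = 2 * n + 1 from by omega]
  calc q ^ (m + 2) * gb q (2 * n) (m + 2) + gb q (2 * n) (m + 1) +
        q ^ (2 * n - m) * (q ^ (m + 1) * gb q (2 * n) (m + 1) + gb q (2 * n) m)
      = q ^ (m + 2) * gb q (2 * n) (m + 2) +
        (1 + q ^ (2 * n - m) * q ^ (m + 1)) * gb q (2 * n) (m + 1) +
        q ^ (2 * n - m) * gb q (2 * n) m := by ring
    _ = _ := by rw [e]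

/-! ### The finite Jacobi triple product -/

/-- Coefficients of the finite Jacobi triple product. -/
def cf (q : A) (n j : ℕ) : A := q ^ tExp n j * gb q (2 * n) j

lemma cf_eq_zero {n j : ℕ} (h : 2 * n < j) : cf q n j = 0 := by
  rw [cf, gb_eq_zero q h, mul_zero]

open Polynomial in
/-- The sum side of the finite Jacobi triple product. -/
noncomputable def jtpSum (q : A) (n : ℕ) : Polynomial A :=
  ∑ j ∈ range (2 * n + 1), Polynomial.C (cf q n j) * Polynomial.X ^ j

open Polynomial in
/-- The product side of the finite Jacobi triple product. -/
noncomputable def jtpProd (q : A) (n : ℕ) : Polynomial A :=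
  (∏ i ∈ range n, (1 + Polynomial.C (q ^ (i + 1)) * Polynomial.X)) *
    ∏ i ∈ range n, (Polynomial.X + Polynomial.C (q ^ i))

lemma coeff_jtpSum (n m : ℕ) : (jtpSum q n).coeff m = cf q n m := by
  rw [jtpSum, Polynomial.finset_sum_coeff]
  simp_rw [Polynomial.coeff_C_mul, Polynomial.coeff_X_pow, mul_ite, mul_one, mul_zero]
  rw [Finset.sum_ite_eq (range (2 * n + 1)) m (cf q n)]
  split_ifs with h
  · rfl
  · rw [cf_eq_zero q (by simp at h; omega)]

lemma cf_rec (n m : ℕ) :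
    cf q (n + 1) m = q ^ n * cf q n m +
      (1 + q ^ (2 * n + 1)) * (if 1 ≤ m then cf q n (m - 1) else 0) +
      q ^ (n + 1) * (if 2 ≤ m then cf q n (m - 2) else 0) := by
  match m with
  | 0 =>
    simp only [if_neg (by omega : ¬ (1:ℕ) ≤ 0), if_neg (by omega : ¬ (2:ℕ) ≤ 0), mul_zero,
      add_zero]
    rw [cf, cf, gb_zero_right, gb_zero_right, mul_one, mul_one, ← pow_add]
    congr 1
    have := tExp_E1 n 0
    omega
  | 1 =>
    simp only [if_pos (le_refl 1), if_neg (by omega : ¬ (2:ℕ) ≤ 1), mul_zero, add_zero,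
      Nat.sub_self]
    simp only [cf]
    rw [show 2 * (n + 1) = 2 * n + 2 from by omega, gb_dp1]
    have p1 : q ^ tExp (n + 1) 1 * q ^ 1 = q ^ n * q ^ tExp n 1 := by
      rw [← pow_add, ← pow_add, tExp_E1 n 1]
    have p2 : (q : A) ^ tExp (n + 1) 1 = q ^ tExp n 0 := by rw [tExp_E2 n 0]
    calc q ^ tExp (n + 1) 1 * (q ^ 1 * gb q (2 * n) 1 + (1 + q ^ (2 * n + 1)) * gb q (2 * n) 0)
        = (q ^ tExp (n + 1) 1 * q ^ 1) * gb q (2 * n) 1 +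
          (1 + q ^ (2 * n + 1)) * (q ^ tExp (n + 1) 1 * gb q (2 * n) 0) := by ring
      _ = _ := by rw [p1, p2]; ring
  | m + 2 =>
    simp only [if_pos (show (1:ℕ) ≤ m + 2 from by omega), if_pos (show (2:ℕ) ≤ m + 2 from by omega),
      show m + 2 - 1 = m + 1 from by omega, Nat.add_sub_cancel]
    rcases le_or_gt (m + 2) (2 * n + 2) with h | h
    · simp only [cf]
      rw [show 2 * (n + 1) = 2 * n + 2 from by omega, gb_dp q n m (by omega)]
      have p1 : q ^ tExp (n + 1) (m + 2) * q ^ (m + 2) = q ^ n * q ^ tExp n (m + 2) := by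
        rw [← pow_add, ← pow_add, tExp_E1 n (m + 2)]
      have p2 : (q : A) ^ tExp (n + 1) (m + 2) = q ^ tExp n (m + 1) := by rw [tExp_E2 n (m + 1)]
      have p3 : q ^ tExp (n + 1) (m + 2) * q ^ (2 * n - m) =
          q ^ (n + 1) * q ^ tExp n m := by
        rw [← pow_add, ← pow_add, tExp_E3 (show m ≤ 2 * n from by omega)]
      calc q ^ tExp (n + 1) (m + 2) * (q ^ (m + 2) * gb q (2 * n) (m + 2) +
            (1 + q ^ (2 * n + 1)) * gb q (2 * n) (m + 1) + q ^ (2 * n - m) * gb q (2 * n) m)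
          = (q ^ tExp (n + 1) (m + 2) * q ^ (m + 2)) * gb q (2 * n) (m + 2) +
            (1 + q ^ (2 * n + 1)) * (q ^ tExp (n + 1) (m + 2) * gb q (2 * n) (m + 1)) +
            (q ^ tExp (n + 1) (m + 2) * q ^ (2 * n - m)) * gb q (2 * n) m := by ring
        _ = _ := by rw [p1, p3, p2]; ring
    · rw [cf_eq_zero q (show 2 * (n + 1) < m + 2 from by omega),
        cf_eq_zero q (show 2 * n < m + 2 from by omega),
        cf_eq_zero q (show 2 * n < m + 1 from by omega),
        cf_eq_zero q (show 2 * n < m from by omega)]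
      simp

open Polynomial in
lemma jtpSum_succ (n : ℕ) :
    jtpSum q (n + 1) = jtpSum q n *
      (Polynomial.C (q ^ n) + Polynomial.C (1 + q ^ (2 * n + 1)) * Polynomial.X +
        Polynomial.C (q ^ (n + 1)) * Polynomial.X ^ 2) := by
  ext m
  rw [coeff_jtpSum, cf_rec]
  have expand : jtpSum q n *
      (Polynomial.C (q ^ n) + Polynomial.C (1 + q ^ (2 * n + 1)) * Polynomial.X +
        Polynomial.C (q ^ (n + 1)) * Polynomial.X ^ 2) =
      jtpSum q n * Polynomial.C (q ^ n) +
      (jtpSum q n * Polynomial.C (1 + q ^ (2 * n + 1))) * Polynomial.X ^ 1 +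
      (jtpSum q n * Polynomial.C (q ^ (n + 1))) * Polynomial.X ^ 2 := by ring
  rw [expand, Polynomial.coeff_add, Polynomial.coeff_add, Polynomial.coeff_mul_C,
    Polynomial.coeff_mul_X_pow', Polynomial.coeff_mul_X_pow', Polynomial.coeff_mul_C,
    Polynomial.coeff_mul_C, coeff_jtpSum]
  split_ifs with h1 h2 h2
  · rw [coeff_jtpSum, coeff_jtpSum]; ring
  · rw [coeff_jtpSum]; ring
  · omega
  · ring

open Polynomial in
theorem jtp (n : ℕ) : jtpProd q n = jtpSum q n := by
  induction n with
  | zero =>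
    rw [jtpProd, jtpSum]
    simp [cf, gb, tExp, tri]
  | succ n ih =>
    rw [jtpProd, prod_range_succ, prod_range_succ, jtpSum_succ, ← ih, jtpProd]
    have key : (1 + Polynomial.C (q ^ (n + 1)) * Polynomial.X) *
        (Polynomial.X + Polynomial.C (q ^ n)) =
        Polynomial.C (q ^ n) + Polynomial.C (1 + q ^ (2 * n + 1)) * Polynomial.X +
          Polynomial.C (q ^ (n + 1)) * Polynomial.X ^ 2 := by
      have : q ^ (n + 1) * q ^ n = q ^ (2 * n + 1) := by
        rw [← pow_add, show n + 1 + n = 2 * n + 1 from by omega]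
      rw [Polynomial.C_add, Polynomial.C_1, ← this, Polynomial.C_mul]
      ring
    calc (∏ i ∈ range n, (1 + Polynomial.C (q ^ (i + 1)) * Polynomial.X)) *
          (1 + Polynomial.C (q ^ (n + 1)) * Polynomial.X) *
          ((∏ i ∈ range n, (Polynomial.X + Polynomial.C (q ^ i))) *
            (Polynomial.X + Polynomial.C (q ^ n)))
        = ((∏ i ∈ range n, (1 + Polynomial.C (q ^ (i + 1)) * Polynomial.X)) *
            ∏ i ∈ range n, (Polynomial.X + Polynomial.C (q ^ i))) *
          ((1 + Polynomial.C (q ^ (n + 1)) * Polynomial.X) *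
            (Polynomial.X + Polynomial.C (q ^ n))) := by ring
      _ = _ := by rw [key]

/-! ### The master identity via the derivative trick -/

open Polynomial in
lemma jtpProd_factor (m : ℕ) :
    jtpProd q (m + 1) =
      ((∏ i ∈ range (m + 1), (1 + Polynomial.C (q ^ (i + 1)) * Polynomial.X)) *
        ∏ i ∈ range m, (Polynomial.X + Polynomial.C (q ^ (i + 1)))) *
      (Polynomial.X + 1) := by
  rw [jtpProd, prod_range_succ' (fun i => Polynomial.X + Polynomial.C (q ^ i)) m]
  simp only [pow_zero, Polynomial.C_1]
  ring

open Polynomial in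
lemma eval_Q1 (m : ℕ) :
    Polynomial.eval (-1 : A)
        (∏ i ∈ range m, (1 + Polynomial.C (q ^ (i + 1)) * Polynomial.X)) = Dq q m := by
  rw [Polynomial.eval_prod, Dq]
  apply Finset.prod_congr rfl
  intro i _
  simp [sub_eq_add_neg, mul_comm]

open Polynomial in
lemma eval_Q2 (m : ℕ) :
    Polynomial.eval (-1 : A)
        (∏ i ∈ range m, (Polynomial.X + Polynomial.C (q ^ (i + 1)))) =
      (-1 : A) ^ m * Dq q m := by
  rw [Polynomial.eval_prod]
  calc ∏ i ∈ range m, Polynomial.eval (-1 : A) (Polynomial.X + Polynomial.C (q ^ (i + 1)))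
      = ∏ i ∈ range m, (-1 : A) * (1 - q ^ (i + 1)) := by
        apply Finset.prod_congr rfl
        intro i _
        simp
        ring
    _ = (-1 : A) ^ m * Dq q m := by
        rw [Finset.prod_mul_distrib, Finset.prod_const, Finset.card_range, Dq]

open Polynomial in
lemma eval_derivative_jtpSum (n : ℕ) :
    Polynomial.eval (-1 : A) (Polynomial.derivative (jtpSum q n)) =
      ∑ j ∈ range (2 * n + 1), cf q n j * (j : A) * (-1 : A) ^ (j - 1) := by
  rw [jtpSum, map_sum, Polynomial.eval_finset_sum]
  apply Finset.sum_congr rfl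
  intro j _
  rw [Polynomial.derivative_C_mul_X_pow]
  simp [mul_comm]

open Polynomial in
theorem master (m : ℕ) :
    Dq q (m + 1) * Dq q m =
      ∑ j ∈ range (2 * (m + 1) + 1), (-1 : A) ^ (m + 1 + j) * (j : A) * cf q (m + 1) j := by
  have h1 : Polynomial.eval (-1 : A) (Polynomial.derivative (jtpProd q (m + 1))) =
      Dq q (m + 1) * ((-1 : A) ^ m * Dq q m) := by
    rw [jtpProd_factor, Polynomial.derivative_mul, Polynomial.eval_add, Polynomial.eval_mul,
      Polynomial.eval_mul]
    simp only [Polynomial.derivative_add, Polynomial.derivative_X, Polynomial.derivative_one,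
      add_zero, Polynomial.eval_add, Polynomial.eval_X, Polynomial.eval_one, Polynomial.eval_mul]
    rw [eval_Q1, eval_Q2]
    ring
  rw [jtp] at h1
  rw [eval_derivative_jtpSum] at h1
  -- multiply both sides by (-1)^m
  have h2 : ((-1 : A) ^ m) * ((-1 : A) ^ m) = 1 := by
    rw [← pow_add]
    have : Even (m + m) := ⟨m, rfl⟩
    exact this.neg_one_pow
  calc Dq q (m + 1) * Dq q m
      = (-1 : A) ^ m * (Dq q (m + 1) * ((-1 : A) ^ m * Dq q m)) := by
        rw [show (-1 : A) ^ m * (Dq q (m + 1) * ((-1 : A) ^ m * Dq q m)) =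
          ((-1 : A) ^ m * (-1 : A) ^ m) * (Dq q (m + 1) * Dq q m) from by ring, h2, one_mul]
    _ = (-1 : A) ^ m * ∑ j ∈ range (2 * (m + 1) + 1), cf q (m + 1) j * (j : A) * (-1:A) ^ (j - 1) := by
        rw [h1]
    _ = _ := by
        rw [Finset.mul_sum]
        apply Finset.sum_congr rfl
        intro j _
        match j with
        | 0 => simp
        | j + 1 =>
          have : (-1 : A) ^ (m + 1 + (j + 1)) = (-1 : A) ^ m * (-1 : A) ^ j := by
            rw [show m + 1 + (j + 1) = (m + j) + 2 from by omega, pow_add, pow_add]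
            ring
          rw [this, Nat.add_sub_cancel]
          ring

/-! ### Power series congruences modulo powers of `X` -/

open PowerSeries

variable {F : Type*} [Field F]

/-- Congruence of power series modulo `X ^ u`. -/
def pmod (u : ℕ) (f g : PowerSeries F) : Prop := (X : PowerSeries F) ^ u ∣ f - g

lemma pmod.refl {u : ℕ} (f : PowerSeries F) : pmod u f f := by
  rw [pmod, sub_self]; exact dvd_zero _

lemma pmod.coeff_eq {u : ℕ} {f g : PowerSeries F} (h : pmod u f g) {j : ℕ} (hj : j < u) :
    coeff j f = coeff j g := by
  have := (PowerSeries.X_pow_dvd_iff.mp h) j hj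
  rw [map_sub, sub_eq_zero] at this
  exact this

lemma pmod_of_le {u v : ℕ} {f g : PowerSeries F} (huv : u ≤ v) (h : pmod v f g) : pmod u f g :=
  dvd_trans (pow_dvd_pow _ huv) h

lemma pmod.mul {u : ℕ} {f g f' g' : PowerSeries F} (h : pmod u f g) (h' : pmod u f' g') :
    pmod u (f * f') (g * g') := by
  have : f * f' - g * g' = (f - g) * f' + g * (f' - g') := by ring
  rw [pmod, this]
  exact dvd_add (h.mul_right _) (h'.mul_left _)

lemma pmod.sum {u : ℕ} {ι : Type*} {s : Finset ι} {f g : ι → PowerSeries F}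
    (h : ∀ i ∈ s, pmod u (f i) (g i)) : pmod u (∑ i ∈ s, f i) (∑ i ∈ s, g i) := by
  rw [pmod, ← Finset.sum_sub_distrib]
  exact Finset.dvd_sum h

lemma pmod_prod_one {u : ℕ} {ι : Type*} {s : Finset ι} {f : ι → PowerSeries F}
    (h : ∀ i ∈ s, pmod u (f i) 1) : pmod u (∏ i ∈ s, f i) 1 := by
  classical
  induction s using Finset.induction_on with
  | empty => simpa using pmod.refl (F := F) 1
  | @insert a s' hx ih =>
    rw [Finset.prod_insert hx]
    have := (h a (Finset.mem_insert_self a s')).mul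
      (ih fun i hi => h i (Finset.mem_insert_of_mem hi))
    simpa using this

lemma pmod_cancel {u : ℕ} {f g v : PowerSeries F} (hv : constantCoeff v ≠ 0)
    (h : pmod u (f * v) (g * v)) : pmod u f g := by
  obtain ⟨c, hc⟩ := h
  have hfg : (f - g) * v = X ^ u * c := by rw [sub_mul]; exact hc
  refine ⟨c * v⁻¹, ?_⟩
  calc f - g = (f - g) * (v * v⁻¹) := by rw [PowerSeries.mul_inv_cancel v hv, mul_one]
    _ = ((f - g) * v) * v⁻¹ := by ring
    _ = X ^ u * (c * v⁻¹) := by rw [hfg]; ring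

/-! ### The Euler products `𝔻 m = ∏ (1 - X^i)` as power series -/

lemma constantCoeff_D (m : ℕ) : constantCoeff (Dq (X : PowerSeries F) m) = 1 := by
  rw [Dq, map_prod]
  apply Finset.prod_eq_one
  intro i _
  rw [map_sub, map_one, map_pow, constantCoeff_X]
  simp

lemma D_ne_zero (m : ℕ) : (Dq (X : PowerSeries F) m) ≠ 0 := by
  intro h
  have := constantCoeff_D (F := F) m
  rw [h, map_zero] at this
  exact zero_ne_one this

lemma D_ratio {a b : ℕ} (h : a ≤ b) :
    pmod (a + 1) (Dq (X : PowerSeries F) b) (Dq (X : PowerSeries F) a) := by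
  have hsplit : Dq (X : PowerSeries F) b =
      Dq (X : PowerSeries F) a * ∏ i ∈ Finset.Ico a b, (1 - (X : PowerSeries F) ^ (i + 1)) := by
    rw [Dq, Dq, Finset.range_eq_Ico, Finset.range_eq_Ico]
    exact (Finset.prod_Ico_consecutive (fun i => (1 - (X : PowerSeries F) ^ (i + 1))) (Nat.zero_le a) h).symm
  have htail : pmod (a + 1) (∏ i ∈ Finset.Ico a b, (1 - (X : PowerSeries F) ^ (i + 1))) 1 := by
    apply pmod_prod_one
    intro i hi
    rw [Finset.mem_Ico] at hi
    rw [pmod]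
    have : (1 - (X : PowerSeries F) ^ (i + 1)) - 1 = -(X ^ (i + 1)) := by ring
    rw [this]
    exact (pow_dvd_pow _ (by omega)).neg_right
  rw [pmod, hsplit]
  have : Dq (X : PowerSeries F) a * ∏ i ∈ Finset.Ico a b, (1 - (X : PowerSeries F) ^ (i + 1)) -
      Dq (X : PowerSeries F) a =
      Dq (X : PowerSeries F) a *
        ((∏ i ∈ Finset.Ico a b, (1 - (X : PowerSeries F) ^ (i + 1))) - 1) := by ring
  rw [this]
  exact Dvd.dvd.mul_left htail _

/-! ### Jacobi's cube identity, coefficientwise -/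

lemma neg_one_pow_parity {a b : ℕ} (h : a % 2 = b % 2) : ((-1 : F)) ^ a = (-1 : F) ^ b := by
  rcases Nat.even_or_odd a with ha | ha
  · have hb : Even b := by rw [Nat.even_iff] at *; omega
    rw [ha.neg_one_pow, hb.neg_one_pow]
  · have hb : Odd b := by rw [Nat.odd_iff] at *; omega
    rw [ha.neg_one_pow, hb.neg_one_pow]

/-- The coefficients in Jacobi's cube identity. -/
def jc (F : Type*) [Field F] (u : ℕ) : F :=
  ∑ k ∈ range (u + 1), if u = tri k then (-1 : F) ^ k * ((2 * k + 1 : ℕ) : F) else 0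

lemma W_pmod (M u j : ℕ) (h : u ≤ M) (hj : j ≤ 2 * (2 * M + 1 + 1))
    (ht : tExp (2 * M + 1 + 1) j ≤ u) :
    pmod (u + 1 - tExp (2 * M + 1 + 1) j)
      (gb (X : PowerSeries F) (2 * (2 * M + 1 + 1)) j *
        ((Dq (X : PowerSeries F) (2 * M + 1))⁻¹ * Dq (X : PowerSeries F) (2 * M + 1 + 1) *
          Dq (X : PowerSeries F) (2 * M + 1 + 1))) 1 := by
  have hVcancel : Dq (X : PowerSeries F) (2 * M + 1) * (Dq (X : PowerSeries F) (2 * M + 1))⁻¹ = 1 :=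
    PowerSeries.mul_inv_cancel _ (by rw [constantCoeff_D]; exact one_ne_zero)
  set n := 2 * M + 1 + 1 with hn
  set v := u + 1 - tExp n j with hv
  have hvle : v ≤ u + 1 := by omega
  apply pmod_cancel
    (v := Dq (X : PowerSeries F) j *
      (Dq (X : PowerSeries F) (2 * n - j) * Dq (X : PowerSeries F) (2 * M + 1)))
    (by rw [map_mul, map_mul, constantCoeff_D, constantCoeff_D, constantCoeff_D]
        simp)
  have lhs_eq : gb (X : PowerSeries F) (2 * n) j *
      ((Dq (X : PowerSeries F) (2 * M + 1))⁻¹ * Dq (X : PowerSeries F) n *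
        Dq (X : PowerSeries F) n) *
      (Dq (X : PowerSeries F) j *
        (Dq (X : PowerSeries F) (2 * n - j) * Dq (X : PowerSeries F) (2 * M + 1))) =
      Dq (X : PowerSeries F) (2 * n) *
        (Dq (X : PowerSeries F) n * Dq (X : PowerSeries F) n) := by
    have hgb := gb_mul_Dq (X : PowerSeries F) (show j ≤ 2 * n from hj)
    calc gb (X : PowerSeries F) (2 * n) j *
        ((Dq (X : PowerSeries F) (2 * M + 1))⁻¹ * Dq (X : PowerSeries F) n *
          Dq (X : PowerSeries F) n) *
        (Dq (X : PowerSeries F) j *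
          (Dq (X : PowerSeries F) (2 * n - j) * Dq (X : PowerSeries F) (2 * M + 1)))
        = (gb (X : PowerSeries F) (2 * n) j * Dq (X : PowerSeries F) j *
            Dq (X : PowerSeries F) (2 * n - j)) *
          (Dq (X : PowerSeries F) n * Dq (X : PowerSeries F) n) *
          (Dq (X : PowerSeries F) (2 * M + 1) * (Dq (X : PowerSeries F) (2 * M + 1))⁻¹) := by
          ring
      _ = _ := by rw [hgb, hVcancel, mul_one]
  rw [lhs_eq, one_mul]
  have p3 : pmod v (Dq (X : PowerSeries F) n) (Dq (X : PowerSeries F) (2 * M + 1)) :=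
    pmod_of_le (show v ≤ 2 * M + 1 + 1 from by omega) (D_ratio (by omega))
  rcases le_or_gt n j with hcase | hcase
  · -- j ≥ n, j - n ≤ u
    have hd : j - n ≤ u := by
      have := tri_le (j - n)
      have he : tExp n j = tri (j - n) := by
        obtain ⟨d, rfl⟩ : ∃ d, j = n + d := ⟨j - n, by omega⟩
        rw [tExp_ge, Nat.add_sub_cancel_left]
      omega
    have p1 : pmod v (Dq (X : PowerSeries F) (2 * n)) (Dq (X : PowerSeries F) j) :=
      pmod_of_le (show v ≤ j + 1 from by omega) (D_ratio hj)
    have p2 : pmod v (Dq (X : PowerSeries F) n) (Dq (X : PowerSeries F) (2 * n - j)) :=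
      pmod_of_le (show v ≤ 2 * n - j + 1 from by omega) (D_ratio (by omega))
    exact p1.mul (p2.mul p3)
  · -- j < n, n - j - 1 ≤ u
    have hd : n - j - 1 ≤ u := by
      have := tri_le (n - j - 1)
      have he : tExp n j = tri (n - j - 1) := tExp_lt hcase
      omega
    have p1 : pmod v (Dq (X : PowerSeries F) (2 * n)) (Dq (X : PowerSeries F) (2 * n - j)) :=
      pmod_of_le (show v ≤ 2 * n - j + 1 from by omega) (D_ratio (by omega))
    have p2 : pmod v (Dq (X : PowerSeries F) n) (Dq (X : PowerSeries F) j) :=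
      pmod_of_le (show v ≤ j + 1 from by omega) (D_ratio (by omega))
    have comp := p1.mul (p2.mul p3)
    have rearrange : Dq (X : PowerSeries F) (2 * n - j) *
        (Dq (X : PowerSeries F) j * Dq (X : PowerSeries F) (2 * M + 1)) =
        Dq (X : PowerSeries F) j *
        (Dq (X : PowerSeries F) (2 * n - j) * Dq (X : PowerSeries F) (2 * M + 1)) := by ring
    rwa [rearrange] at comp

theorem coeff_D_cubed (u M : ℕ) (h : u ≤ M) :
    (coeff u) ((Dq (X : PowerSeries F) M) ^ 3) = jc F u := by
  have cube : ∀ f : PowerSeries F, f ^ 3 = f * (f * f) := fun f => by ring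
  have hVcancel : Dq (X : PowerSeries F) (2 * M + 1) * (Dq (X : PowerSeries F) (2 * M + 1))⁻¹ = 1 :=
    PowerSeries.mul_inv_cancel _ (by rw [constantCoeff_D]; exact one_ne_zero)
  -- Step 1: pass to the longer product
  have h1 : pmod (u + 1) (Dq (X : PowerSeries F) (2 * M + 1 + 1)) (Dq (X : PowerSeries F) M) :=
    pmod_of_le (by omega) (D_ratio (show M ≤ 2 * M + 1 + 1 from by omega))
  have step1 : (coeff u) ((Dq (X : PowerSeries F) M) ^ 3) =
      (coeff u) ((Dq (X : PowerSeries F) (2 * M + 1 + 1)) ^ 3) := by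
    have hp : pmod (u + 1) ((Dq (X : PowerSeries F) (2 * M + 1 + 1)) ^ 3)
        ((Dq (X : PowerSeries F) M) ^ 3) := by
      rw [cube, cube]
      exact h1.mul (h1.mul h1)
    exact (hp.coeff_eq (by omega)).symm
  rw [step1]
  -- Step 3: exact identity from the master identity
  have hm := master (X : PowerSeries F) (2 * M + 1)
  set V := (Dq (X : PowerSeries F) (2 * M + 1))⁻¹ * Dq (X : PowerSeries F) (2 * M + 1 + 1) *
    Dq (X : PowerSeries F) (2 * M + 1 + 1) with hV
  have step3 : Dq (X : PowerSeries F) (2 * M + 1 + 1) ^ 3 =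
      ∑ j ∈ range (2 * (2 * M + 1 + 1) + 1),
        (-1 : PowerSeries F) ^ (2 * M + 1 + 1 + j) * (j : PowerSeries F) *
          (cf (X : PowerSeries F) (2 * M + 1 + 1) j * V) := by
    calc Dq (X : PowerSeries F) (2 * M + 1 + 1) ^ 3
        = (Dq (X : PowerSeries F) (2 * M + 1 + 1) * Dq (X : PowerSeries F) (2 * M + 1)) * V := by
          rw [hV]
          calc Dq (X : PowerSeries F) (2 * M + 1 + 1) ^ 3
              = (Dq (X : PowerSeries F) (2 * M + 1) * (Dq (X : PowerSeries F) (2 * M + 1))⁻¹) *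
                (Dq (X : PowerSeries F) (2 * M + 1 + 1) * (Dq (X : PowerSeries F) (2 * M + 1 + 1) *
                  Dq (X : PowerSeries F) (2 * M + 1 + 1))) := by rw [hVcancel, cube]; ring
            _ = _ := by ring
      _ = (∑ j ∈ range (2 * (2 * M + 1 + 1) + 1),
            (-1 : PowerSeries F) ^ (2 * M + 1 + 1 + j) * (j : PowerSeries F) *
              cf (X : PowerSeries F) (2 * M + 1 + 1) j) * V := by rw [hm]
      _ = _ := by
          rw [Finset.sum_mul]
          apply Finset.sum_congr rfl
          intro j _
          ring
  -- Step 4: the congruence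
  have step4 : pmod (u + 1) (Dq (X : PowerSeries F) (2 * M + 1 + 1) ^ 3)
      (∑ j ∈ range (2 * (2 * M + 1 + 1) + 1),
        (-1 : PowerSeries F) ^ (2 * M + 1 + 1 + j) * (j : PowerSeries F) *
          (X : PowerSeries F) ^ (tExp (2 * M + 1 + 1) j)) := by
    rw [step3]
    apply pmod.sum
    intro j hj
    rw [Finset.mem_range] at hj
    have core : pmod (u + 1) (cf (X : PowerSeries F) (2 * M + 1 + 1) j * V)
        ((X : PowerSeries F) ^ (tExp (2 * M + 1 + 1) j)) := by
      have diff_eq : cf (X : PowerSeries F) (2 * M + 1 + 1) j * V -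
          (X : PowerSeries F) ^ (tExp (2 * M + 1 + 1) j) =
          (X : PowerSeries F) ^ (tExp (2 * M + 1 + 1) j) *
            (gb (X : PowerSeries F) (2 * (2 * M + 1 + 1)) j * V - 1) := by
        rw [cf]; ring
      rw [pmod, diff_eq]
      rcases le_or_gt (u + 1) (tExp (2 * M + 1 + 1) j) with hcase | hcase
      · exact Dvd.dvd.mul_right (pow_dvd_pow _ hcase) _
      · have hw := W_pmod (F := F) M u j h (by omega) (by omega)
        obtain ⟨c, hc⟩ := hw
        rw [hc, ← mul_assoc, ← pow_add,
          show tExp (2 * M + 1 + 1) j + (u + 1 - tExp (2 * M + 1 + 1) j) = u + 1 from by omega]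
        exact Dvd.intro c rfl
    exact (pmod.refl _).mul core
  -- Step 5: compute the coefficient of the sum of monomials
  rw [step4.coeff_eq (by omega)]
  rw [map_sum]
  have term_eq : ∀ j : ℕ,
      (coeff u) ((-1 : PowerSeries F) ^ (2 * M + 1 + 1 + j) * (j : PowerSeries F) *
        (X : PowerSeries F) ^ (tExp (2 * M + 1 + 1) j)) =
      (if u = tExp (2 * M + 1 + 1) j then (-1 : F) ^ (2 * M + 1 + 1 + j) * (j : F) else 0) := by
    intro j
    have hC : ((-1 : PowerSeries F) ^ (2 * M + 1 + 1 + j) * (j : PowerSeries F)) =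
        C ((-1 : F) ^ (2 * M + 1 + 1 + j) * (j : F)) := by
      rw [map_mul, map_pow, map_neg, map_one, map_natCast]
    rw [hC, coeff_C_mul, coeff_X_pow, mul_ite, mul_one, mul_zero]
  rw [Finset.sum_congr rfl fun j _ => term_eq j]
  -- now reindex
  set n := 2 * M + 1 + 1 with hn
  rw [show 2 * n + 1 = n + (n + 1) from by omega, Finset.sum_range_add,
    Finset.sum_range_succ (fun x => if u = tExp n (n + x)
      then (-1 : F) ^ (n + (n + x)) * ((n + x : ℕ) : F) else 0) n]
  have last_zero : (if u = tExp n (n + n) then (-1 : F) ^ (n + (n + n)) * ((n + n : ℕ) : F)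
      else 0) = 0 := by
    rw [tExp_ge n n, if_neg (by have := tri_le n; omega)]
  rw [last_zero, add_zero]
  rw [← Finset.sum_range_reflect
    (fun j => if u = tExp n j then (-1 : F) ^ (n + j) * ((j : ℕ) : F) else 0) n]
  rw [← Finset.sum_add_distrib]
  have per_k : ∀ k ∈ range n,
      ((if u = tExp n (n - 1 - k) then (-1 : F) ^ (n + (n - 1 - k)) * ((n - 1 - k : ℕ) : F)
        else 0) +
       (if u = tExp n (n + k) then (-1 : F) ^ (n + (n + k)) * ((n + k : ℕ) : F) else 0)) =
      (if u = tri k then (-1 : F) ^ k * ((2 * k + 1 : ℕ) : F) else 0) := by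
    intro k hk
    rw [Finset.mem_range] at hk
    have e1 : tExp n (n + k) = tri k := tExp_ge n k
    have e2 : tExp n (n - 1 - k) = tri k := by
      rw [tExp_lt (show n - 1 - k < n from by omega),
        show n - (n - 1 - k) - 1 = k from by omega]
    rw [e1, e2]
    by_cases hu : u = tri k
    · rw [if_pos hu, if_pos hu, if_pos hu]
      have s1 : (-1 : F) ^ (n + (n + k)) = (-1 : F) ^ k := neg_one_pow_parity (by omega)
      have s2 : (-1 : F) ^ (n + (n - 1 - k)) = (-1 : F) ^ (k + 1) := neg_one_pow_parity (by omega)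
      have c1 : ((n - 1 - k : ℕ) : F) + ((2 * k + 1 : ℕ) : F) = ((n + k : ℕ) : F) := by
        rw [← Nat.cast_add, show n - 1 - k + (2 * k + 1) = n + k from by omega]
      have c2 : ((n + k : ℕ) : F) - ((n - 1 - k : ℕ) : F) = ((2 * k + 1 : ℕ) : F) := by
        rw [← c1]; ring
      rw [s1, s2, pow_succ]
      calc (-1 : F) ^ k * (-1) * ((n - 1 - k : ℕ) : F) + (-1 : F) ^ k * ((n + k : ℕ) : F)
          = (-1 : F) ^ k * (((n + k : ℕ) : F) - ((n - 1 - k : ℕ) : F)) := by ring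
        _ = _ := by rw [c2]
    · rw [if_neg hu, if_neg hu, if_neg hu, add_zero]
  rw [Finset.sum_congr rfl per_k]
  rw [jc]
  symm
  apply Finset.sum_subset (show range (u + 1) ⊆ range n from by
    intro x hx
    rw [Finset.mem_range] at *
    omega)
  intro k _ hk
  rw [Finset.mem_range, not_lt] at hk
  rw [if_neg (by have := tri_le k; omega)]

/-! ### Assembly over `ZMod 7` -/

instance fact_prime_seven : Fact (Nat.Prime 7) := ⟨by norm_num⟩

lemma constantCoeff_B7 {F : Type*} [Field F] (m : ℕ) :
    constantCoeff (∏ i ∈ range m, (1 - (X : PowerSeries F) ^ (7 * (i + 1)))) = 1 := by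
  rw [map_prod]
  apply Finset.prod_eq_one
  intro i _
  rw [map_sub, map_one, map_pow, constantCoeff_X]
  simp

instance : CharP (PowerSeries (ZMod 7)) 7 := by
  constructor
  intro n
  constructor
  · intro hn
    have : constantCoeff (n : PowerSeries (ZMod 7)) = 0 := by rw [hn, map_zero]
    rw [map_natCast] at this
    exact (ZMod.natCast_eq_zero_iff n 7).mp this
  · intro hn
    have : ((n : ZMod 7)) = 0 := (ZMod.natCast_eq_zero_iff n 7).mpr hn
    rw [← map_natCast (C (R := ZMod 7)) n, this, map_zero]

lemma D_pow_seven (m : ℕ) :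
    (Dq (X : PowerSeries (ZMod 7)) m) ^ 7 =
      ∏ i ∈ range m, (1 - (X : PowerSeries (ZMod 7)) ^ (7 * (i + 1))) := by
  rw [Dq, ← Finset.prod_pow]
  apply Finset.prod_congr rfl
  intro i _
  rw [sub_pow_char (p := 7), one_pow, ← pow_mul, mul_comm (i + 1) 7]

lemma B7_support (m : ℕ) : ∀ {j : ℕ}, ¬ 7 ∣ j →
    coeff j (∏ i ∈ range m, (1 - (X : PowerSeries (ZMod 7)) ^ (7 * (i + 1)))) = 0 := by
  induction m with
  | zero =>
    intro j hj
    rw [Finset.prod_range_zero, coeff_one, if_neg (by omega)]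
  | succ m ih =>
    intro j hj
    rw [Finset.prod_range_succ, coeff_mul]
    apply Finset.sum_eq_zero
    rintro ⟨a, b⟩ hab
    rw [Finset.HasAntidiagonal.mem_antidiagonal] at hab
    by_cases hb : 7 ∣ b
    · have ha : ¬ 7 ∣ a := by omega
      rw [ih ha, zero_mul]
    · have : coeff b (1 - (X : PowerSeries (ZMod 7)) ^ (7 * (m + 1))) = 0 := by
        rw [map_sub, coeff_one, coeff_X_pow, if_neg (by omega), if_neg (by omega)]
        ring
      rw [this, mul_zero]

lemma B7_inv_support (m : ℕ) {j : ℕ} (hj : ¬ 7 ∣ j) :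
    coeff j (∏ i ∈ range m, (1 - (X : PowerSeries (ZMod 7)) ^ (7 * (i + 1))))⁻¹ = 0 := by
  set B := ∏ i ∈ range m, (1 - (X : PowerSeries (ZMod 7)) ^ (7 * (i + 1))) with hB
  have hBc : constantCoeff B = 1 := constantCoeff_B7 m
  have hBinv : B⁻¹ * B = 1 := PowerSeries.inv_mul_cancel _ (by rw [hBc]; exact one_ne_zero)
  have hrec : B⁻¹ = 1 + B⁻¹ * (1 - B) := by
    calc B⁻¹ = B⁻¹ * B + B⁻¹ * (1 - B) := by ring
      _ = 1 + B⁻¹ * (1 - B) := by rw [hBinv]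
  induction j using Nat.strong_induction_on with
  | _ j ihj =>
    rw [hrec, map_add, coeff_one, if_neg (by omega), zero_add, coeff_mul]
    apply Finset.sum_eq_zero
    rintro ⟨a, b⟩ hab
    rw [Finset.HasAntidiagonal.mem_antidiagonal] at hab
    by_cases hb7 : 7 ∣ b
    · rcases Nat.eq_zero_or_pos b with hb0 | hb0
      · subst hb0
        have : coeff 0 (1 - B) = 0 := by
          rw [map_sub, coeff_one, coeff_zero_eq_constantCoeff, hBc]
          simp
        rw [this, mul_zero]
      · have ha : ¬ 7 ∣ a := by omega
        have ha' : a < j := by omega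
        rw [ihj a ha' ha, zero_mul]
    · have : coeff b (1 - B) = 0 := by
        rw [map_sub, coeff_one, if_neg (by omega), B7_support m hb7]
        ring
      rw [this, mul_zero]

/-! ### Generating function for partitions (from Archive/Wiedijk100Theorems/Partition.lean) -/

open Finset.HasAntidiagonal

open scoped Classical

noncomputable section

universe u
variable {ι : Type u}

/-- A convenience constructor for the power series whose coefficients indicate a subset. -/
def indicatorSeries (α : Type*) [Semiring α] (s : Set ℕ) : PowerSeries α :=
  PowerSeries.mk fun n => if n ∈ s then 1 else 0

theorem coeff_indicator (s : Set ℕ) [Semiring α] (n : ℕ) :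
    coeff n (indicatorSeries α s) = if n ∈ s then 1 else 0 :=
  coeff_mk _ _

theorem coeff_indicator_pos (s : Set ℕ) [Semiring α] (n : ℕ) (h : n ∈ s) :
    coeff n (indicatorSeries α s) = 1 := by rw [coeff_indicator, if_pos h]

theorem coeff_indicator_neg (s : Set ℕ) [Semiring α] (n : ℕ) (h : n ∉ s) :
    coeff n (indicatorSeries α s) = 0 := by rw [coeff_indicator, if_neg h]

theorem constantCoeff_indicator (s : Set ℕ) [Semiring α] :
    constantCoeff (indicatorSeries α s) = if 0 ∈ s then 1 else 0 :=
  rfl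

theorem two_series (i : ℕ) [Semiring α] :
    1 + (X : PowerSeries α) ^ i.succ = indicatorSeries α {0, i.succ} := by
  ext n
  simp only [coeff_indicator, coeff_one, coeff_X_pow, Set.mem_insert_iff, Set.mem_singleton_iff,
    map_add]
  cases' n with d
  · simp [(Nat.succ_ne_zero i).symm]
  · simp [Nat.succ_ne_zero d]

theorem num_series' [Field α] (i : ℕ) :
    (1 - (X : PowerSeries α) ^ (i + 1))⁻¹ = indicatorSeries α {k | i + 1 ∣ k} := by
  rw [PowerSeries.inv_eq_iff_mul_eq_one]
  · ext n
    cases n with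
    | zero => simp [mul_sub, zero_pow, constantCoeff_indicator]
    | succ n =>
      simp only [coeff_one, if_false, mul_sub, mul_one, coeff_indicator,
        LinearMap.map_sub, reduceCtorEq]
      simp_rw [coeff_mul, coeff_X_pow, coeff_indicator, @boole_mul _ _ _ _]
      erw [@sum_ite _ _ _ _ _ (fun _ => Classical.propDecidable _), sum_ite]
      simp_rw [@filter_filter _ _ _ _ _, sum_const_zero, add_zero, sum_const, nsmul_eq_mul, mul_one,
        sub_eq_iff_eq_add, zero_add]
      symm
      split_ifs with h
      · suffices #{a ∈ antidiagonal (n + 1) | i + 1 ∣ a.fst ∧ a.snd = i + 1} = 1 by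
          simp only [Set.mem_setOf_eq]; convert congr_arg ((↑) : ℕ → α) this; norm_cast
        rw [card_eq_one]
        cases' h with p hp
        refine ⟨((i + 1) * (p - 1), i + 1), ?_⟩
        ext ⟨a₁, a₂⟩
        simp only [mem_filter, Prod.mk.injEq, HasAntidiagonal.mem_antidiagonal, mem_singleton]
        constructor
        · rintro ⟨a_left, ⟨a, rfl⟩, rfl⟩
          refine ⟨?_, rfl⟩
          rw [Nat.mul_sub_left_distrib, ← hp, ← a_left, mul_one, Nat.add_sub_cancel]
        · rintro ⟨rfl, rfl⟩
          match p with
          | 0 => rw [mul_zero] at hp; cases hp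
          | p + 1 => rw [hp]; simp [mul_add]
      · suffices #{a ∈ antidiagonal (n + 1) | i + 1 ∣ a.fst ∧ a.snd = i + 1} = 0 by
          simp only [Set.mem_setOf_eq]; convert congr_arg ((↑) : ℕ → α) this; norm_cast
        rw [card_eq_zero]
        apply eq_empty_of_forall_notMem
        simp only [Prod.forall, mem_filter, not_and, HasAntidiagonal.mem_antidiagonal]
        rintro _ h₁ h₂ ⟨a, rfl⟩ rfl
        apply h
        simp [← h₂]
  · simp [zero_pow]

def mkOdd : ℕ ↪ ℕ :=
  ⟨fun i => 2 * i + 1, fun x y h => by linarith⟩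

-- The main workhorse of the partition theorem proof.
theorem partialGF_prop (α : Type*) [CommSemiring α] (n : ℕ) (s : Finset ℕ) (hs : ∀ i ∈ s, 0 < i)
    (c : ℕ → Set ℕ) (hc : ∀ i, i ∉ s → 0 ∈ c i) :
    #{p : n.Partition | (∀ j, p.parts.count j ∈ c j) ∧ ∀ j ∈ p.parts, j ∈ s} =
      coeff n (∏ i ∈ s, indicatorSeries α ((· * i) '' c i)) := by
  simp_rw [coeff_prod, coeff_indicator, prod_boole, sum_boole]
  apply congr_arg
  simp only [mem_univ, forall_true_left, not_and, not_forall, exists_prop,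
    Set.mem_image, not_exists]
  set φ : (a : Nat.Partition n) →
    a ∈ filter (fun p ↦ (∀ (j : ℕ), Multiset.count j p.parts ∈ c j) ∧ ∀ j ∈ p.parts, j ∈ s) univ →
    ℕ →₀ ℕ := fun p _ => {
      toFun := fun i => Multiset.count i p.parts • i
      support := Finset.filter (fun i => i ≠ 0) p.parts.toFinset
      mem_support_toFun := fun a => by
        simp only [smul_eq_mul, ne_eq, mul_eq_zero, Multiset.count_eq_zero]
        rw [not_or, not_not]
        simp only [Multiset.mem_toFinset, not_not, mem_filter] }
  refine Finset.card_bij φ ?_ ?_ ?_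
  · intro a ha
    simp only [φ, not_forall, not_exists, not_and, exists_prop, mem_filter]
    rw [mem_finsuppAntidiag]
    dsimp only [ne_eq, smul_eq_mul, id_eq, eq_mpr_eq_cast, le_eq_subset, Finsupp.coe_mk]
    simp only [mem_univ, forall_true_left, not_and, not_forall, exists_prop,
      mem_filter, true_and] at ha
    refine ⟨⟨?_, fun i ↦ ?_⟩, fun i _ ↦ ⟨a.parts.count i, ha.1 i, rfl⟩⟩
    · conv_rhs => simp [← a.parts_sum]
      rw [sum_multiset_count_of_subset _ s]
      · simp only [smul_eq_mul]
      · intro i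
        simp only [Multiset.mem_toFinset, not_not, mem_filter]
        apply ha.2
    · simp only [ne_eq, Multiset.mem_toFinset, not_not, mem_filter, and_imp]
      exact fun hi _ ↦ ha.2 i hi
  · intro p₁ hp₁ p₂ hp₂ h
    apply Nat.Partition.ext
    simp only [true_and, mem_univ, mem_filter] at hp₁ hp₂
    ext i
    simp only [φ, ne_eq, Multiset.mem_toFinset, not_not, smul_eq_mul, Finsupp.mk.injEq] at h
    by_cases hi : i = 0
    · rw [hi]
      rw [Multiset.count_eq_zero_of_notMem]
      · rw [Multiset.count_eq_zero_of_notMem]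
        intro a; exact Nat.lt_irrefl 0 (hs 0 (hp₂.2 0 a))
      intro a; exact Nat.lt_irrefl 0 (hs 0 (hp₁.2 0 a))
    · rw [← mul_left_inj' hi]
      rw [funext_iff] at h
      exact h.2 i
  · simp only [φ, mem_filter, mem_finsuppAntidiag, mem_univ, exists_prop, true_and, and_assoc]
    rintro f ⟨hf, hf₃, hf₄⟩
    have hf' : f ∈ finsuppAntidiag s n := mem_finsuppAntidiag.mpr ⟨hf, hf₃⟩
    simp only [mem_finsuppAntidiag] at hf'
    refine ⟨⟨∑ i ∈ s, Multiset.replicate (f i / i) i, ?_, ?_⟩, ?_, ?_, ?_⟩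
    · intro i hi
      simp only [exists_prop, Multiset.mem_sum, mem_map, Function.Embedding.coeFn_mk] at hi
      rcases hi with ⟨t, ht, z⟩
      apply hs
      rwa [Multiset.eq_of_mem_replicate z]
    · simp_rw [Multiset.sum_sum, Multiset.sum_replicate, Nat.nsmul_eq_mul]
      rw [← hf'.1]
      refine sum_congr rfl fun i hi => Nat.div_mul_cancel ?_
      rcases hf₄ i hi with ⟨w, _, hw₂⟩
      rw [← hw₂]
      exact dvd_mul_left _ _
    · intro i
      simp_rw [Multiset.count_sum', Multiset.count_replicate, sum_ite_eq']
      split_ifs with h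
      · rcases hf₄ i h with ⟨w, hw₁, hw₂⟩
        rwa [← hw₂, Nat.mul_div_cancel _ (hs i h)]
      · exact hc _ h
    · intro i hi
      rw [Multiset.mem_sum] at hi
      rcases hi with ⟨j, hj₁, hj₂⟩
      rwa [Multiset.eq_of_mem_replicate hj₂]
    · ext i
      simp_rw [Multiset.count_sum', Multiset.count_replicate, sum_ite_eq']
      simp only [ne_eq, Multiset.mem_toFinset, not_not, smul_eq_mul, ite_mul,
        zero_mul, Finsupp.coe_mk]
      split_ifs with h
      · apply Nat.div_mul_cancel
        rcases hf₄ i h with ⟨w, _, hw₂⟩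
        apply Dvd.intro_left _ hw₂
      · apply symm
        rw [← Finsupp.notMem_support_iff]
        exact notMem_mono hf'.2 h


theorem card_partition_eq_coeff {α : Type*} [Field α] (N m : ℕ) (hNm : N ≤ m) :
    ((Fintype.card (Nat.Partition N) : α)) =
      coeff N (∏ i ∈ range m, (1 - (X : PowerSeries α) ^ (i + 1))⁻¹) := by
  have key := partialGF_prop α N ((range m).map ⟨Nat.succ, Nat.succ_injective⟩)
    (by intro i hi
        simp only [Finset.mem_map, Function.Embedding.coeFn_mk] at hi
        obtain ⟨a, -, rfl⟩ := hi
        exact Nat.succ_pos a)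
    (fun _ => Set.univ) (fun _ _ => trivial)
  have hLHS : #{p : N.Partition | (∀ j, p.parts.count j ∈ (Set.univ : Set ℕ)) ∧
      ∀ j ∈ p.parts, j ∈ (range m).map ⟨Nat.succ, Nat.succ_injective⟩} =
      Fintype.card (Nat.Partition N) := by
    rw [Fintype.card]
    congr 1
    apply Finset.filter_true_of_mem
    intro pp _
    constructor
    · intro j; trivial
    · intro j hj
      simp only [Finset.mem_map, Finset.mem_range, Function.Embedding.coeFn_mk]
      have hj1 : 0 < j := pp.parts_pos hj
      have hjN : j ≤ N := by
        simpa [pp.parts_sum] using Multiset.single_le_sum (fun _ _ => Nat.zero_le _) _ hj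
      exact ⟨j - 1, by omega, by omega⟩
  have hRHS : ∏ i ∈ (range m).map ⟨Nat.succ, Nat.succ_injective⟩,
      indicatorSeries α ((· * i) '' Set.univ) =
      ∏ i ∈ range m, (1 - (X : PowerSeries α) ^ (i + 1))⁻¹ := by
    rw [Finset.prod_map]
    apply Finset.prod_congr rfl
    intro i _
    have hset : ((· * (i + 1)) '' Set.univ : Set ℕ) = {k | i + 1 ∣ k} := by
      ext k
      simp only [Set.mem_image, Set.mem_univ, true_and, Set.mem_setOf_eq]
      constructor
      · rintro ⟨c, rfl⟩
        exact ⟨c, mul_comm _ _⟩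
      · rintro ⟨c, rfl⟩
        exact ⟨c, mul_comm _ _⟩
    simp only [Function.Embedding.coeFn_mk, Nat.succ_eq_add_one]
    rw [hset, num_series']
  rw [← hLHS, key, hRHS]

theorem main_result (n : ℕ) : Fintype.card (Nat.Partition (7 * n + 5)) ≡ 0 [MOD 7] := by
  have hcast : ((Fintype.card (Nat.Partition (7 * n + 5)) : ZMod 7)) = 0 → _ := fun h =>
    (Nat.modEq_zero_iff_dvd).mpr ((ZMod.natCast_eq_zero_iff _ 7).mp h)
  apply hcast
  set N := 7 * n + 5 with hN
  -- Euler product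
  rw [card_partition_eq_coeff N N (le_refl N)]
  -- product of inverses is inverse of product
  have hprodinv : ∏ i ∈ range N, (1 - (X : PowerSeries (ZMod 7)) ^ (i + 1))⁻¹ =
      (Dq (X : PowerSeries (ZMod 7)) N)⁻¹ := by
    have hD : Dq (X : PowerSeries (ZMod 7)) N * (Dq (X : PowerSeries (ZMod 7)) N)⁻¹ = 1 :=
      PowerSeries.mul_inv_cancel _ (by rw [constantCoeff_D]; exact one_ne_zero)
    have hmul : (∏ i ∈ range N, (1 - (X : PowerSeries (ZMod 7)) ^ (i + 1))⁻¹) *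
        Dq (X : PowerSeries (ZMod 7)) N = 1 := by
      rw [Dq, ← Finset.prod_mul_distrib]
      apply Finset.prod_eq_one
      intro i _
      apply PowerSeries.inv_mul_cancel
      rw [map_sub, map_one, map_pow, constantCoeff_X]
      simp
    calc ∏ i ∈ range N, (1 - (X : PowerSeries (ZMod 7)) ^ (i + 1))⁻¹
        = (∏ i ∈ range N, (1 - (X : PowerSeries (ZMod 7)) ^ (i + 1))⁻¹) *
          (Dq (X : PowerSeries (ZMod 7)) N * (Dq (X : PowerSeries (ZMod 7)) N)⁻¹) := by
          rw [hD, mul_one]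
      _ = ((∏ i ∈ range N, (1 - (X : PowerSeries (ZMod 7)) ^ (i + 1))⁻¹) *
          Dq (X : PowerSeries (ZMod 7)) N) * (Dq (X : PowerSeries (ZMod 7)) N)⁻¹ := by ring
      _ = (Dq (X : PowerSeries (ZMod 7)) N)⁻¹ := by rw [hmul, one_mul]
  rw [hprodinv]
  -- split off the 7th power
  set B := ∏ i ∈ range N, (1 - (X : PowerSeries (ZMod 7)) ^ (7 * (i + 1))) with hB
  have key : (Dq (X : PowerSeries (ZMod 7)) N)⁻¹ =
      (Dq (X : PowerSeries (ZMod 7)) N) ^ 6 * B⁻¹ := by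
    have h7 : (Dq (X : PowerSeries (ZMod 7)) N) ^ 7 = B := D_pow_seven N
    have hD : Dq (X : PowerSeries (ZMod 7)) N * (Dq (X : PowerSeries (ZMod 7)) N)⁻¹ = 1 :=
      PowerSeries.mul_inv_cancel _ (by rw [constantCoeff_D]; exact one_ne_zero)
    have hBc : B * B⁻¹ = 1 :=
      PowerSeries.mul_inv_cancel _ (by rw [hB, constantCoeff_B7]; exact one_ne_zero)
    calc (Dq (X : PowerSeries (ZMod 7)) N)⁻¹
        = (Dq (X : PowerSeries (ZMod 7)) N)⁻¹ * (B * B⁻¹) := by rw [hBc, mul_one]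
      _ = (Dq (X : PowerSeries (ZMod 7)) N)⁻¹ * ((Dq (X : PowerSeries (ZMod 7)) N) ^ 7 * B⁻¹) := by
          rw [h7]
      _ = (Dq (X : PowerSeries (ZMod 7)) N * (Dq (X : PowerSeries (ZMod 7)) N)⁻¹) *
          ((Dq (X : PowerSeries (ZMod 7)) N) ^ 6 * B⁻¹) := by ring
      _ = _ := by rw [hD, one_mul]
  rw [key, coeff_mul]
  apply Finset.sum_eq_zero
  rintro ⟨a, b⟩ hab
  rw [Finset.HasAntidiagonal.mem_antidiagonal] at hab
  simp only at hab ⊢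
  by_cases hb : 7 ∣ b
  · -- a ≡ 5 mod 7; show the sixth-power coefficient vanishes
    suffices hcoeff : coeff a ((Dq (X : PowerSeries (ZMod 7)) N) ^ 6) = 0 by
      rw [hcoeff, zero_mul]
    have h6 : (Dq (X : PowerSeries (ZMod 7)) N) ^ 6 =
        (Dq (X : PowerSeries (ZMod 7)) N) ^ 3 * (Dq (X : PowerSeries (ZMod 7)) N) ^ 3 := by ring
    rw [h6, coeff_mul]
    apply Finset.sum_eq_zero
    rintro ⟨x, y⟩ hxy
    rw [Finset.HasAntidiagonal.mem_antidiagonal] at hxy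
    simp only at hxy ⊢
    rw [coeff_D_cubed x N (by omega), coeff_D_cubed y N (by omega), jc, jc,
      Finset.sum_mul_sum]
    apply Finset.sum_eq_zero
    intro k _
    apply Finset.sum_eq_zero
    intro l _
    by_cases hx : x = tri k
    · by_cases hy : y = tri l
      · rw [if_pos hx, if_pos hy]
        have hsqk : (2 * k + 1) ^ 2 = 4 * (2 * tri k) + 1 := by
          rw [two_mul_tri]; ring
        have hsql : (2 * l + 1) ^ 2 = 4 * (2 * tri l) + 1 := by
          rw [two_mul_tri]; ring
        have hmod : ((2 * k + 1) ^ 2 + (2 * l + 1) ^ 2) % 7 = 0 := by omega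
        have hz : ((2 * k + 1 : ℕ) : ZMod 7) ^ 2 + ((2 * l + 1 : ℕ) : ZMod 7) ^ 2 = 0 := by
          rw [← Nat.cast_pow, ← Nat.cast_pow, ← Nat.cast_add,
            ZMod.natCast_eq_zero_iff]
          omega
        have hdec : ∀ s t : ZMod 7, s ^ 2 + t ^ 2 = 0 → s = 0 := by decide
        have hzero : ((2 * k + 1 : ℕ) : ZMod 7) = 0 := hdec _ _ hz
        rw [hzero, mul_zero, zero_mul]
      · rw [if_neg hy, mul_zero]
    · rw [if_neg hx, zero_mul]
  · rw [B7_inv_support N hb, mul_zero]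

end

end Ramanujan7

/-- The number of partitions of `n`. -/
def p (n : ℕ) : ℕ := Fintype.card (Nat.Partition n)

theorem partition_congruence_mod_seven (n : ℕ) : p (7 * n + 5) ≡ 0 [MOD 7] :=
  Ramanujan7.main_result n
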